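/- Let d ≥ 1, let P, M be symmetric positive-definite real d×d matrices such that P − M is positive definite, and let Ã be a real d×d matrix such that ÃᵀPÃ − P + M is negative semidefinite. Let f̃ : ℝᵈ → ℝᵈ satisfy f̃(x)ᵀ P f̃(x) ≤ xᵀ Ãᵀ P Ã x for all x ∈ ℝᵈ. Let (Ω, ℱ, ℙ) be a probability space and w : Ω → ℝᵈ a random vector whose components are square-integrable with E[w_i] = 0 for each i, and let S be the second-moment matrix S_{ij} = E[w_i w_j]. Set t₀ = tr(P S), λ' = eig_max(P^{-1/2}(P − M)P^{-1/2}), μ = (1 + λ')/2, and V(x) = 1 + (1/2) xᵀPx. Then μ < 1, and for every x ∈ ℝᵈ with xᵀPx ≥ t₀/(1 − μ) + 2 one has E[V(f̃(x) + w)] ≤ μ V(x). -/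

import Mathlib

/-!
Whitening with `R = P^{1/2}` reduces everything to `Q = R⁻¹(P - M)R⁻¹`: the Rayleigh bound for `Q`
gives `xᵀ(P - M)x ≤ λ' xᵀPx`, and `1 - Q = R⁻¹MR⁻¹` being positive definite forces `λ' < 1`.
Together with `ÃᵀPÃ ≤ P - M` this yields `f̃(x)ᵀPf̃(x) ≤ λ' xᵀPx`. As the noise is centred,
`E[(a + w)ᵀP(a + w)] = aᵀPa + tr(PS)`, so `E[V(f̃(x) + w)] ≤ 1 + (λ' xᵀPx + t₀)/2`; with
`λ' = 2μ - 1` the gap to `μ V(x)` is `((1 - μ)(xᵀPx - 2) - t₀)/2 ≥ 0`.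
-/

open Matrix MeasureTheory

noncomputable def eigMax {d : ℕ} (Q : Matrix (Fin d) (Fin d) ℝ) : ℝ :=
  sSup {μ : ℝ | Module.End.HasEigenvalue (Matrix.toLin' Q) μ}

/-- The square root of a positive semidefinite matrix, as defined in Mathlib (Dec 2024)
(since removed from Mathlib). -/
noncomputable def Matrix.PosSemidef.sqrt {n : Type*} [Fintype n] [DecidableEq n]
    {A : Matrix n n ℝ} (hA : A.PosSemidef) : Matrix n n ℝ :=
  hA.1.eigenvectorUnitary.1 * diagonal ((↑) ∘ Real.sqrt ∘ hA.1.eigenvalues) *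
    (star hA.1.eigenvectorUnitary : Matrix n n ℝ)

lemma Matrix.dotProduct_mulVec_transpose_mul_mul {R m n : Type*} [CommSemiring R] [Fintype m]
    [Fintype n] (A : Matrix m m R) (C : Matrix m n R) (x : n → R) :
    x ⬝ᵥ ((Cᵀ * A * C) *ᵥ x) = (C *ᵥ x) ⬝ᵥ (A *ᵥ (C *ᵥ x)) := by
  rw [← mulVec_mulVec, ← mulVec_mulVec, dotProduct_mulVec x Cᵀ, vecMul_transpose]

namespace Matrix.PosSemidef

variable {n : Type*} [Fintype n] [DecidableEq n] {A : Matrix n n ℝ}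

lemma sqrt_eq_conjStarAlgAut (hA : A.PosSemidef) :
    hA.sqrt = Unitary.conjStarAlgAut ℝ _ hA.1.eigenvectorUnitary
      (diagonal ((↑) ∘ Real.sqrt ∘ hA.1.eigenvalues)) := rfl

lemma sqrt_mul_self (hA : A.PosSemidef) : hA.sqrt * hA.sqrt = A := by
  conv_rhs => rw [hA.1.spectral_theorem]
  rw [sqrt_eq_conjStarAlgAut, ← map_mul, diagonal_mul_diagonal]
  congr 2
  funext i
  simp [Real.mul_self_sqrt (hA.eigenvalues_nonneg i)]

lemma transpose_sqrt (hA : A.PosSemidef) : hA.sqrtᵀ = hA.sqrt := by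
  rw [← conjTranspose_eq_transpose_of_trivial, ← star_eq_conjTranspose, sqrt_eq_conjStarAlgAut,
    ← map_star, star_eq_conjTranspose, diagonal_conjTranspose]
  simp

end Matrix.PosSemidef

namespace Matrix.IsHermitian

variable {n : Type*} [Fintype n] [DecidableEq n] {Q : Matrix n n ℝ}

lemma posSemidef_smul_one_sub (hQ : Q.IsHermitian) {c : ℝ} (hc : ∀ i, hQ.eigenvalues i ≤ c) :
    (c • 1 - Q).PosSemidef := by
  have hdiag : c • 1 - Q = Unitary.conjStarAlgAut ℝ _ hQ.eigenvectorUnitary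
      (diagonal fun i => c - hQ.eigenvalues i) := by
    conv_lhs => rw [hQ.spectral_theorem]
    rw [← map_one (Unitary.conjStarAlgAut ℝ _ hQ.eigenvectorUnitary), ← map_smul, ← map_sub]
    congr 1
    ext i j
    rcases eq_or_ne i j with rfl | hij <;> simp [*]
  rw [hdiag, Unitary.conjStarAlgAut_apply]
  exact (PosSemidef.diagonal fun i => sub_nonneg.2 (hc i)).mul_mul_conjTranspose_same _

lemma dotProduct_mulVec_le (hQ : Q.IsHermitian) {c : ℝ} (hc : ∀ i, hQ.eigenvalues i ≤ c)
    (y : n → ℝ) : y ⬝ᵥ (Q *ᵥ y) ≤ c * (y ⬝ᵥ y) := by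
  have h := (hQ.posSemidef_smul_one_sub hc).dotProduct_mulVec_nonneg y
  rw [star_trivial, sub_mulVec, smul_mulVec, one_mulVec, dotProduct_sub, dotProduct_smul,
    smul_eq_mul] at h
  linarith

end Matrix.IsHermitian

lemma Matrix.hasEigenvalue_toLin'_iff {n : Type*} [Fintype n] [DecidableEq n] {Q : Matrix n n ℝ}
    {μ : ℝ} : Module.End.HasEigenvalue (toLin' Q) μ ↔ μ ∈ spectrum ℝ Q := by
  rw [Module.End.hasEigenvalue_iff_mem_spectrum, show toLin' Q = toLinAlgEquiv' Q from rfl,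
    AlgEquiv.spectrum_eq]

section EigMax

variable {d : ℕ} {Q : Matrix (Fin d) (Fin d) ℝ}

lemma Matrix.IsHermitian.eigenvalues_le_eigMax (hQ : Q.IsHermitian) (i : Fin d) :
    hQ.eigenvalues i ≤ eigMax Q :=
  le_csSup (Module.End.finite_hasEigenvalue _).bddAbove
    (hasEigenvalue_toLin'_iff.2 (hQ.eigenvalues_mem_spectrum_real i))

lemma eigMax_lt_one (hQ : (1 - Q).PosDef) : eigMax Q < 1 := by
  rcases Set.eq_empty_or_nonempty {μ : ℝ | Module.End.HasEigenvalue (toLin' Q) μ} with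
    hempty | hne
  · -- `d = 0`: the junk value `sSup ∅ = 0`
    rw [eigMax, hempty, Real.sSup_empty]
    exact one_pos
  obtain ⟨v, hv⟩ := (hne.csSup_mem (Module.End.finite_hasEigenvalue _)).exists_hasEigenvector
  have hQv : Q *ᵥ v = eigMax Q • v := by rw [← toLin'_apply]; exact hv.apply_eq_smul
  have hvv : 0 ≤ v ⬝ᵥ v := by simpa only [star_trivial] using dotProduct_star_self_nonneg v
  have hpos := hQ.dotProduct_mulVec_pos hv.2
  rw [star_trivial, sub_mulVec, one_mulVec, hQv, dotProduct_sub, dotProduct_smul,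
    smul_eq_mul] at hpos
  nlinarith

end EigMax

namespace Matrix.PosDef

variable {n : Type*} [Fintype n] [DecidableEq n] {P M : Matrix n n ℝ}

lemma isUnit_det_sqrt (hP : P.PosDef) : IsUnit hP.posSemidef.sqrt.det := by
  refine isUnit_of_mul_isUnit_left (y := hP.posSemidef.sqrt.det) ?_
  rw [← det_mul, hP.posSemidef.sqrt_mul_self]
  exact hP.det_pos.ne'.isUnit

lemma dotProduct_mulVec_eq_sqrt (hP : P.PosDef) (x : n → ℝ) :
    x ⬝ᵥ (P *ᵥ x) = (hP.posSemidef.sqrt *ᵥ x) ⬝ᵥ (hP.posSemidef.sqrt *ᵥ x) := by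
  have h := dotProduct_mulVec_transpose_mul_mul 1 hP.posSemidef.sqrt x
  rwa [Matrix.mul_one, hP.posSemidef.transpose_sqrt, hP.posSemidef.sqrt_mul_self,
    one_mulVec] at h

lemma inv_sqrt_mul_mul_inv_sqrt (hP : P.PosDef) :
    (hP.posSemidef.sqrt)⁻¹ * P * (hP.posSemidef.sqrt)⁻¹ = 1 := by
  conv_lhs => enter [1, 2]; rw [← hP.posSemidef.sqrt_mul_self]
  rw [← Matrix.mul_assoc, nonsing_inv_mul _ hP.isUnit_det_sqrt, Matrix.one_mul,
    mul_nonsing_inv _ hP.isUnit_det_sqrt]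

lemma posDef_one_sub_inv_sqrt_mul_sub_mul_inv_sqrt (hP : P.PosDef) (hM : M.PosDef) :
    (1 - (hP.posSemidef.sqrt)⁻¹ * (P - M) * (hP.posSemidef.sqrt)⁻¹).PosDef := by
  set R := hP.posSemidef.sqrt
  have h : 1 - R⁻¹ * (P - M) * R⁻¹ = (R⁻¹)ᴴ * M * R⁻¹ := by
    rw [conjTranspose_eq_transpose_of_trivial, transpose_nonsing_inv, hP.posSemidef.transpose_sqrt,
      Matrix.mul_sub, Matrix.sub_mul, hP.inv_sqrt_mul_mul_inv_sqrt, sub_sub_cancel]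
  rw [h]
  exact hM.conjTranspose_mul_mul_same (mulVec_injective_of_det_ne_zero
    (isUnit_nonsing_inv_det _ hP.isUnit_det_sqrt).ne_zero)

end Matrix.PosDef

lemma Matrix.PosDef.dotProduct_sub_mulVec_le_eigMax {d : ℕ} {P M : Matrix (Fin d) (Fin d) ℝ}
    (hP : P.PosDef) (hM : M.IsHermitian) (x : Fin d → ℝ) :
    x ⬝ᵥ ((P - M) *ᵥ x) ≤ eigMax ((hP.posSemidef.sqrt)⁻¹ * (P - M) * (hP.posSemidef.sqrt)⁻¹) *
      (x ⬝ᵥ (P *ᵥ x)) := by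
  set R := hP.posSemidef.sqrt
  set Q := R⁻¹ * (P - M) * R⁻¹
  have hRT : Rᵀ = R := hP.posSemidef.transpose_sqrt
  have hQ : Q.IsHermitian := by
    have h := isHermitian_conjTranspose_mul_mul R⁻¹ (hP.isHermitian.sub hM)
    rwa [conjTranspose_eq_transpose_of_trivial, transpose_nonsing_inv, hRT] at h
  have hPM : P - M = Rᵀ * Q * R := by
    rw [hRT, ← Matrix.mul_assoc, ← Matrix.mul_assoc, mul_nonsing_inv _ hP.isUnit_det_sqrt,
      Matrix.one_mul, Matrix.mul_assoc, nonsing_inv_mul _ hP.isUnit_det_sqrt, Matrix.mul_one]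
  calc x ⬝ᵥ ((P - M) *ᵥ x) = (R *ᵥ x) ⬝ᵥ (Q *ᵥ (R *ᵥ x)) := by
        rw [hPM, dotProduct_mulVec_transpose_mul_mul]
    _ ≤ eigMax Q * ((R *ᵥ x) ⬝ᵥ (R *ᵥ x)) := hQ.dotProduct_mulVec_le hQ.eigenvalues_le_eigMax _
    _ = eigMax Q * (x ⬝ᵥ (P *ᵥ x)) := by rw [hP.dotProduct_mulVec_eq_sqrt]

section SecondMoments

variable {Ω ι : Type*} [MeasurableSpace Ω] {ℙ : Measure Ω}

lemma integral_add_mul_add_of_integral_eq_zero [IsProbabilityMeasure ℙ] {f g : Ω → ℝ}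
    (hf : MemLp f 2 ℙ) (hg : MemLp g 2 ℙ) (hf0 : ∫ ω, f ω ∂ℙ = 0) (hg0 : ∫ ω, g ω ∂ℙ = 0)
    (a b : ℝ) : ∫ ω, (a + f ω) * (b + g ω) ∂ℙ = a * b + ∫ ω, f ω * g ω ∂ℙ := by
  have hfi : Integrable f ℙ := hf.integrable one_le_two
  have hgi : Integrable g ℙ := hg.integrable one_le_two
  have hfg : Integrable (fun ω => f ω * g ω) ℙ := hf.integrable_mul hg
  have hexp : (fun ω => (a + f ω) * (b + g ω)) =
      fun ω => a * b + (a * g ω + (b * f ω + f ω * g ω)) := by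
    funext ω; ring
  have hbf : Integrable (fun ω => b * f ω + f ω * g ω) ℙ := (hfi.const_mul b).add hfg
  have hagbf : Integrable (fun ω => a * g ω + (b * f ω + f ω * g ω)) ℙ :=
    (hgi.const_mul a).add hbf
  rw [hexp, integral_add (integrable_const _) hagbf, integral_add (hgi.const_mul a) hbf,
    integral_add (hfi.const_mul b) hfg]
  simp [integral_const_mul, hf0, hg0]

lemma integrable_add_mul_add [IsFiniteMeasure ℙ] {f g : Ω → ℝ} (hf : MemLp f 2 ℙ)
    (hg : MemLp g 2 ℙ) (a b : ℝ) : Integrable (fun ω => (a + f ω) * (b + g ω)) ℙ :=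
  ((memLp_const a).add hf).integrable_mul ((memLp_const b).add hg)

variable [Fintype ι]

lemma Matrix.dotProduct_mulVec_eq_sum (P : Matrix ι ι ℝ) (v : ι → ℝ) :
    v ⬝ᵥ (P *ᵥ v) = ∑ i, ∑ j, P i j * (v i * v j) := by
  simp only [dotProduct, mulVec, Finset.mul_sum]
  exact Finset.sum_congr rfl fun i _ => Finset.sum_congr rfl fun j _ => by ring

lemma integrable_dotProduct_mulVec_add [IsFiniteMeasure ℙ] (P : Matrix ι ι ℝ) (a : ι → ℝ)
    {w : Ω → ι → ℝ} (hw : ∀ i, MemLp (fun ω => w ω i) 2 ℙ) :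
    Integrable (fun ω => (a + w ω) ⬝ᵥ (P *ᵥ (a + w ω))) ℙ := by
  simp_rw [dotProduct_mulVec_eq_sum]
  refine integrable_finsetSum _ fun i _ => integrable_finsetSum _ fun j _ => ?_
  exact (integrable_add_mul_add (hw i) (hw j) (a i) (a j)).const_mul _

lemma integral_dotProduct_mulVec_add [IsProbabilityMeasure ℙ] (P : Matrix ι ι ℝ) (a : ι → ℝ)
    {w : Ω → ι → ℝ} (hw : ∀ i, MemLp (fun ω => w ω i) 2 ℙ) (hw0 : ∀ i, ∫ ω, w ω i ∂ℙ = 0) :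
    ∫ ω, (a + w ω) ⬝ᵥ (P *ᵥ (a + w ω)) ∂ℙ =
      a ⬝ᵥ (P *ᵥ a) + (P * Matrix.of fun i j => ∫ ω, w ω i * w ω j ∂ℙ).trace := by
  have hterm : ∀ i j, Integrable (fun ω => P i j * ((a + w ω) i * (a + w ω) j)) ℙ := fun i j =>
    (integrable_add_mul_add (hw i) (hw j) (a i) (a j)).const_mul _
  have hij : ∀ i j, ∫ ω, P i j * ((a + w ω) i * (a + w ω) j) ∂ℙ =
      P i j * (a i * a j) + P i j * ∫ ω, w ω j * w ω i ∂ℙ := by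
    intro i j
    simp only [Pi.add_apply]
    rw [integral_const_mul, integral_add_mul_add_of_integral_eq_zero (hw i) (hw j) (hw0 i) (hw0 j)]
    simp_rw [mul_comm (w _ j)]
    ring
  simp_rw [dotProduct_mulVec_eq_sum]
  rw [integral_finsetSum _ fun i _ => integrable_finsetSum _ fun j _ => hterm i j]
  simp_rw [integral_finsetSum _ fun j _ => hterm _ j, hij]
  simp only [trace, diag, mul_apply, of_apply, Finset.sum_add_distrib]

end SecondMoments

theorem drift_condition_outside_sublevel_general (d : ℕ)
    (P M : Matrix (Fin d) (Fin d) ℝ) (hP : P.PosDef) (hM : M.PosDef)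
    (At : Matrix (Fin d) (Fin d) ℝ)
    (hneg : ∀ x : Fin d → ℝ, x ⬝ᵥ ((Atᵀ * P * At - P + M) *ᵥ x) ≤ 0)
    (ft : (Fin d → ℝ) → (Fin d → ℝ))
    (hft : ∀ x : Fin d → ℝ, (ft x) ⬝ᵥ (P *ᵥ (ft x)) ≤ x ⬝ᵥ ((Atᵀ * P * At) *ᵥ x))
    {Ω : Type*} [MeasurableSpace Ω] (ℙ : Measure Ω) [IsProbabilityMeasure ℙ]
    (w : Ω → Fin d → ℝ)
    (hw2 : ∀ i, MemLp (fun ω => w ω i) 2 ℙ)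
    (hw0 : ∀ i, ∫ ω, w ω i ∂ℙ = 0)
    (S : Matrix (Fin d) (Fin d) ℝ)
    (hS : S = Matrix.of fun i j => ∫ ω, w ω i * w ω j ∂ℙ)
    (t₀ : ℝ) (ht₀ : t₀ = (P * S).trace)
    (lam' : ℝ) (hlam' : lam' = eigMax ((hP.posSemidef.sqrt)⁻¹ * (P - M) * (hP.posSemidef.sqrt)⁻¹))
    (μ : ℝ) (hμ : μ = (1 + lam') / 2)
    (V : (Fin d → ℝ) → ℝ) (hV : ∀ x, V x = 1 + (1 / 2) * (x ⬝ᵥ (P *ᵥ x))) :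
    μ < 1 ∧
      ∀ x : Fin d → ℝ, t₀ / (1 - μ) + 2 ≤ x ⬝ᵥ (P *ᵥ x) →
        ∫ ω, V (ft x + w ω) ∂ℙ ≤ μ * V x := by
  have hlam : lam' < 1 :=
    hlam' ▸ eigMax_lt_one (hP.posDef_one_sub_inv_sqrt_mul_sub_mul_inv_sqrt hM)
  have hμ1 : μ < 1 := by linarith
  refine ⟨hμ1, fun x hx => ?_⟩
  have hfx : ft x ⬝ᵥ (P *ᵥ ft x) ≤ lam' * (x ⬝ᵥ (P *ᵥ x)) :=
    calc ft x ⬝ᵥ (P *ᵥ ft x) ≤ x ⬝ᵥ ((Atᵀ * P * At) *ᵥ x) := hft x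
      _ ≤ x ⬝ᵥ ((P - M) *ᵥ x) := by
        have h := hneg x
        simp only [add_mulVec, sub_mulVec, dotProduct_add, dotProduct_sub] at h ⊢
        linarith
      _ ≤ lam' * (x ⬝ᵥ (P *ᵥ x)) := hlam' ▸ hP.dotProduct_sub_mulVec_le_eigMax hM.isHermitian x
  have hEV : ∫ ω, V (ft x + w ω) ∂ℙ = 1 + 1 / 2 * (ft x ⬝ᵥ (P *ᵥ ft x) + t₀) := by
    simp_rw [hV]
    rw [integral_add (integrable_const 1)
        ((integrable_dotProduct_mulVec_add P (ft x) hw2).const_mul _), integral_const_mul,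
      integral_dotProduct_mulVec_add P (ft x) hw2 hw0, ht₀, hS]
    simp
  have ht₀x : t₀ ≤ (1 - μ) * (x ⬝ᵥ (P *ᵥ x) - 2) := by
    rw [← div_le_iff₀' (by linarith)]
    linarith
  rw [hEV, hV x]
  subst hμ
  linear_combination (1 / 2) * hfx + (1 / 2) * ht₀x

/-- Drift condition outside a sublevel set: with `V(x) = 1 + xᵀPx/2`,
`μ = (1 + eig_max(P^{-1/2}(P-M)P^{-1/2}))/2 < 1` and, for every `x` with
`xᵀPx ≥ tr(PS)/(1-μ) + 2`, `E[V(f̃(x) + w)] ≤ μ V(x)`. -/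
theorem drift_condition_outside_sublevel (d : ℕ) (hd : 1 ≤ d)
    (P M : Matrix (Fin d) (Fin d) ℝ) (hP : P.PosDef) (hM : M.PosDef)
    (hPM : (P - M).PosDef)
    (At : Matrix (Fin d) (Fin d) ℝ)
    (hneg : ∀ x : Fin d → ℝ, x ⬝ᵥ ((Atᵀ * P * At - P + M) *ᵥ x) ≤ 0)
    (ft : (Fin d → ℝ) → (Fin d → ℝ))
    (hft : ∀ x : Fin d → ℝ, (ft x) ⬝ᵥ (P *ᵥ (ft x)) ≤ x ⬝ᵥ ((Atᵀ * P * At) *ᵥ x))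
    {Ω : Type*} [MeasurableSpace Ω] (ℙ : Measure Ω) [IsProbabilityMeasure ℙ]
    (w : Ω → Fin d → ℝ)
    (hw2 : ∀ i, MemLp (fun ω => w ω i) 2 ℙ)
    (hw0 : ∀ i, ∫ ω, w ω i ∂ℙ = 0)
    (S : Matrix (Fin d) (Fin d) ℝ)
    (hS : S = Matrix.of fun i j => ∫ ω, w ω i * w ω j ∂ℙ)
    (t₀ : ℝ) (ht₀ : t₀ = (P * S).trace)
    (lam' : ℝ) (hlam' : lam' = eigMax ((hP.posSemidef.sqrt)⁻¹ * (P - M) * (hP.posSemidef.sqrt)⁻¹))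
    (μ : ℝ) (hμ : μ = (1 + lam') / 2)
    (V : (Fin d → ℝ) → ℝ) (hV : ∀ x, V x = 1 + (1 / 2) * (x ⬝ᵥ (P *ᵥ x))) :
    μ < 1 ∧
      ∀ x : Fin d → ℝ, t₀ / (1 - μ) + 2 ≤ x ⬝ᵥ (P *ᵥ x) →
        ∫ ω, V (ft x + w ω) ∂ℙ ≤ μ * V x :=
  drift_condition_outside_sublevel_general d P M hP hM At hneg ft hft ℙ w hw2 hw0 S hS t₀ ht₀ lam'
    hlam' μ hμ V hV
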